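/- Let X be an order complete locally solid vector lattice with the AM-property and the Levi property, and Y any locally solid vector lattice. Then every order bounded linear operator T : X → Y maps topologically bounded sets to topologically bounded sets. -/

import Mathlib

open Filter Topology Bornology Set

/-- A solid subset of a lattice-ordered group. -/
def SolidSet {X : Type*} [Lattice X] [AddCommGroup X] (s : Set X) : Prop :=
  ∀ x y : X, |x| ≤ |y| → y ∈ s → x ∈ s

/-- The set of all finite suprema of elements of `A`. -/
def FinSups {X : Type*} [Lattice X] (A : Set X) : Set X :=
  {x | ∃ a ∈ A, ∃ l : List X, (∀ b ∈ l, b ∈ A) ∧ x = l.foldr (· ⊔ ·) a}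

/-- A locally solid topology: a basis at zero of solid sets. -/
def IsLocallySolid (X : Type*) [Lattice X] [AddCommGroup X] [TopologicalSpace X] : Prop :=
  ∀ U ∈ 𝓝 (0 : X), ∃ V ∈ 𝓝 (0 : X), SolidSet V ∧ V ⊆ U

/-- AM-property: finite suprema of topologically bounded sets are topologically bounded. -/
def HasAMProperty (X : Type*) [Lattice X] [AddCommGroup X] [Module ℝ X]
    [TopologicalSpace X] : Prop :=
  ∀ B : Set X, IsVonNBounded ℝ B → IsVonNBounded ℝ (FinSups B)

/-- Levi property: bounded upward directed sets of positive elements have suprema. -/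
def HasLeviProperty (X : Type*) [Lattice X] [AddCommGroup X] [Module ℝ X]
    [TopologicalSpace X] : Prop :=
  ∀ D : Set X, D.Nonempty → DirectedOn (· ≤ ·) D → (∀ x ∈ D, 0 ≤ x) →
    IsVonNBounded ℝ D → ∃ y, IsLUB D y

/-- Lebesgue property: nets decreasing to `0` converge to `0` topologically. -/
def HasLebesgueProperty (X : Type*) [Lattice X] [AddCommGroup X]
    [TopologicalSpace X] : Prop :=
  ∀ {ι : Type} [Nonempty ι] [SemilatticeSup ι] (u : ι → X),
    Antitone u → IsGLB (Set.range u) 0 → Tendsto u atTop (𝓝 0)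

/-- Order (Dedekind) completeness. -/
def OrderComplete (X : Type*) [Lattice X] : Prop :=
  ∀ A : Set X, A.Nonempty → BddAbove A → ∃ y, IsLUB A y

/-- A set is order closed if it contains suprema of its upward directed subsets. -/
def OrderClosedSet {X : Type*} [Lattice X] (s : Set X) : Prop :=
  ∀ A : Set X, A ⊆ s → DirectedOn (· ≤ ·) A → ∀ y, IsLUB A y → y ∈ s

/-- Fatou property: a basis at zero of solid order closed sets. -/
def HasFatouProperty (X : Type*) [Lattice X] [AddCommGroup X] [TopologicalSpace X] : Prop :=
  ∀ U ∈ 𝓝 (0 : X), ∃ V ∈ 𝓝 (0 : X), SolidSet V ∧ OrderClosedSet V ∧ V ⊆ U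

variable {X Y : Type*} [Lattice X] [AddCommGroup X] [Module ℝ X] [TopologicalSpace X]
  [Lattice Y] [AddCommGroup Y] [Module ℝ Y] [TopologicalSpace Y]

/-- An order bounded operator maps order bounded sets to order bounded sets. -/
def OrderBoundedOp (T : X →ₗ[ℝ] Y) : Prop :=
  ∀ A : Set X, BddBelow A → BddAbove A → BddBelow (T '' A) ∧ BddAbove (T '' A)

/-- nb-bounded: maps some zero neighborhood to a topologically bounded set. -/
def NbBoundedOp (T : X →ₗ[ℝ] Y) : Prop :=
  ∃ U ∈ 𝓝 (0 : X), IsVonNBounded ℝ (T '' U)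

/-- bb-bounded: maps topologically bounded sets to topologically bounded sets. -/
def BbBoundedOp (T : X →ₗ[ℝ] Y) : Prop :=
  ∀ B : Set X, IsVonNBounded ℝ B → IsVonNBounded ℝ (T '' B)

/-- `M` is the modulus of `S` (Riesz–Kantorovich formula). -/
def IsModulusOf (S M : X →ₗ[ℝ] Y) : Prop :=
  ∀ x : X, 0 ≤ x → IsLUB {y : Y | ∃ u : X, |u| ≤ x ∧ y = |S u|} (M x)

/-- The order on operators: `T ≤ S` pointwise on the positive cone. -/
def OpLE (T S : X →ₗ[ℝ] Y) : Prop := ∀ x : X, 0 ≤ x → T x ≤ S x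

/-!
By the AM-property, the positive finite suprema of `B ∪ {0}` form a topologically bounded upward
directed set; its supremum, given by the Levi property, bounds `B` from above, and likewise for
`-B`. So a topologically bounded `B` is order bounded, hence so is `T '' B`, and order bounded
sets of a locally solid space are topologically bounded.
-/

section LatticeOrderedGroup

variable {G : Type*} [Lattice G] [AddCommGroup G] [AddLeftMono G]

theorem inf_add_le_inf_add_inf {u v w : G} (hu : 0 ≤ u) (hv : 0 ≤ v) (hw : 0 ≤ w) :
    u ⊓ (v + w) ≤ u ⊓ v + u ⊓ w :=
  calc u ⊓ (v + w) ≤ (u + u) ⊓ (u + w) ⊓ ((v + u) ⊓ (v + w)) :=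
        le_inf (le_inf (inf_le_left.trans (le_add_of_nonneg_left hu))
            (inf_le_left.trans (le_add_of_nonneg_right hw)))
          (le_inf (inf_le_left.trans (le_add_of_nonneg_left hv)) inf_le_right)
    _ = u ⊓ v + u ⊓ w := by rw [← add_inf, ← add_inf, ← inf_add]

theorem inf_nsmul_eq_zero_of_inf_eq_zero {u v : G} (hu : 0 ≤ u) (hv : 0 ≤ v) (h : u ⊓ v = 0)
    (n : ℕ) : u ⊓ n • v = 0 := by
  induction n with
  | zero => simpa using hu
  | succ k ih =>
    refine le_antisymm ?_ (le_inf hu (nsmul_nonneg hv _))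
    calc u ⊓ (k + 1) • v ≤ u ⊓ k • v + u ⊓ v :=
          succ_nsmul v k ▸ inf_add_le_inf_add_inf hu (nsmul_nonneg hv k) hv
      _ = 0 := by rw [ih, h, add_zero]

/-- `d⁻` is disjoint from `n • d⁺`, yet dominated by it once `0 ≤ n • d`. -/
theorem nonneg_of_nsmul_nonneg {n : ℕ} (hn : n ≠ 0) {d : G} (h : 0 ≤ n • d) : 0 ≤ d := by
  have hdisj : d⁻ ⊓ n • d⁺ = 0 := inf_nsmul_eq_zero_of_inf_eq_zero (negPart_nonneg d)
    (posPart_nonneg d) (by rw [inf_comm, posPart_inf_negPart_eq_zero]) n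
  have hle : d⁻ ≤ n • d⁺ :=
    calc d⁻ ≤ n • d⁻ := le_self_nsmul (negPart_nonneg d) hn
      _ ≤ n • d⁺ := sub_nonneg.mp (by rwa [← nsmul_sub, posPart_sub_negPart])
  exact negPart_eq_zero.mp (inf_eq_left.mpr hle ▸ hdisj)

theorem le_of_nsmul_le_nsmul {n : ℕ} (hn : n ≠ 0) {a b : G} (h : n • a ≤ n • b) : a ≤ b :=
  sub_nonneg.mp (nonneg_of_nsmul_nonneg hn (by rwa [nsmul_sub, sub_nonneg]))

theorem abs_inv_natCast_smul_le [Module ℝ G] {n : ℕ} (hn : n ≠ 0) {x m : G} (h : |x| ≤ m) :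
    |(n : ℝ)⁻¹ • x| ≤ (n : ℝ)⁻¹ • m := by
  have hcancel (z : G) : n • ((n : ℝ)⁻¹ • z) = z := by
    rw [← Nat.cast_smul_eq_nsmul ℝ, smul_inv_smul₀ (Nat.cast_ne_zero.mpr hn)]
  refine abs_le'.mpr ⟨le_of_nsmul_le_nsmul hn ?_, le_of_nsmul_le_nsmul hn ?_⟩
  · rw [hcancel, hcancel]
    exact (le_abs_self x).trans h
  · rw [smul_neg, hcancel, hcancel]
    exact (neg_le_abs x).trans h

end LatticeOrderedGroup

section LocallySolid

variable {G : Type*} [Lattice G] [AddCommGroup G] [AddLeftMono G] [Module ℝ G]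
  [TopologicalSpace G] [ContinuousSMul ℝ G]

/-- Scalar multiplication is not assumed monotone, so `c • y` is written as
`(c * n) • ((n : ℝ)⁻¹ • y)`: the modulus of the second factor is controlled in the lattice,
and `c * n` is small. -/
theorem IsLocallySolid.isVonNBounded_setOf_abs_le (hG : IsLocallySolid G) (m : G) :
    IsVonNBounded ℝ {y : G | |y| ≤ m} := by
  intro U hU
  rw [absorbs_iff_eventually_nhds_zero (mem_of_mem_nhds hU)]
  have hsmul : Tendsto (fun p : ℝ × G => p.1 • p.2) (𝓝 0 ×ˢ 𝓝 0) (𝓝 0) := by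
    simpa [← nhds_prod_eq] using (continuous_smul (M := ℝ) (X := G)).tendsto (0, 0)
  obtain ⟨S, hS, U₀, hU₀, hSU⟩ := mem_prod_iff.mp (hsmul hU)
  obtain ⟨V, hV, hVsolid, hVU₀⟩ := hG U₀ hU₀
  have hinv : Tendsto (fun n : ℕ => (n : ℝ)⁻¹ • m) atTop (𝓝 0) := by
    simpa using ((tendsto_inv_atTop_zero (𝕜 := ℝ)).comp tendsto_natCast_atTop_atTop).smul_const m
  obtain ⟨n, hnV, hn⟩ := ((hinv.eventually_mem hV).and (eventually_ne_atTop 0)).exists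
  have hnS : {c : ℝ | c * n ∈ S} ∈ 𝓝 0 :=
    (continuous_mul_const (n : ℝ)).tendsto' 0 0 (zero_mul _) hS
  filter_upwards [hnS] with c hc y hy
  have hle := abs_inv_natCast_smul_le hn hy
  have hyV : (n : ℝ)⁻¹ • y ∈ V :=
    hVsolid _ _ (hle.trans_eq (abs_of_nonneg ((abs_nonneg _).trans hle)).symm) hnV
  simpa [smul_smul, mul_assoc, Nat.cast_ne_zero.mpr hn] using hSU (mk_mem_prod hc (hVU₀ hyV))

theorem IsLocallySolid.isVonNBounded_of_bddBelow_of_bddAbove (hG : IsLocallySolid G)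
    {s : Set G} (hlo : BddBelow s) (hhi : BddAbove s) : IsVonNBounded ℝ s := by
  obtain ⟨p, hp⟩ := hlo
  obtain ⟨q, hq⟩ := hhi
  refine (hG.isVonNBounded_setOf_abs_le (|p| ⊔ |q|)).subset fun y hy => abs_le'.mpr ⟨?_, ?_⟩
  · exact (hq hy).trans ((le_abs_self q).trans le_sup_right)
  · exact (neg_le_neg_iff.mpr (hp hy)).trans ((neg_le_abs p).trans le_sup_left)

end LocallySolid

section FinSups

variable {L : Type*} [Lattice L] {A : Set L}

theorem subset_finSups : A ⊆ FinSups A :=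
  fun a ha => ⟨a, ha, [], by simp, rfl⟩

theorem sup_mem_finSups {x y : L} (hx : x ∈ FinSups A) (hy : y ∈ FinSups A) :
    x ⊔ y ∈ FinSups A := by
  obtain ⟨a, ha, l, hl, rfl⟩ := hx
  induction l with
  | nil =>
    obtain ⟨b, hb, l', hl', rfl⟩ := hy
    exact ⟨b, hb, a :: l', by simpa [List.forall_mem_cons] using ⟨ha, hl'⟩, rfl⟩
  | cons c t ih =>
    obtain ⟨b, hb, l', hl', heq⟩ := ih fun d hd => hl d (List.mem_cons_of_mem c hd)
    refine ⟨b, hb, c :: l', by simpa using ⟨hl c (by simp), hl'⟩, ?_⟩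
    rw [List.foldr_cons, sup_assoc, heq, List.foldr_cons]

end FinSups

section AMLevi

variable {G : Type*} [Lattice G] [AddCommGroup G] [Module ℝ G] [TopologicalSpace G]
  [ContinuousSMul ℝ G]

theorem HasAMProperty.bddAbove_of_isVonNBounded (hAM : HasAMProperty G) (hLevi : HasLeviProperty G)
    {B : Set G} (hB : IsVonNBounded ℝ B) : BddAbove B := by
  set D : Set G := {x | x ∈ FinSups (insert 0 B) ∧ 0 ≤ x}
  have hD0 : (0 : G) ∈ D := ⟨subset_finSups (mem_insert 0 B), le_rfl⟩
  have hDdir : DirectedOn (· ≤ ·) D := fun x hx y hy =>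
    ⟨x ⊔ y, ⟨sup_mem_finSups hx.1 hy.1, hx.2.trans le_sup_left⟩, le_sup_left, le_sup_right⟩
  have hDbdd : IsVonNBounded ℝ D := (hAM _ (hB.insert 0)).subset fun x hx => hx.1
  obtain ⟨e, he⟩ := hLevi D ⟨0, hD0⟩ hDdir (fun x hx => hx.2) hDbdd
  refine ⟨e, fun b hb => le_sup_left.trans (he.1 ⟨?_, le_sup_right⟩)⟩
  exact sup_mem_finSups (subset_finSups (mem_insert_of_mem 0 hb)) hD0.1

theorem HasAMProperty.bddBelow_of_isVonNBounded [AddLeftMono G] [IsTopologicalAddGroup G]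
    (hAM : HasAMProperty G) (hLevi : HasLeviProperty G) {B : Set G} (hB : IsVonNBounded ℝ B) :
    BddBelow B :=
  bddAbove_neg.mp (hAM.bddAbove_of_isVonNBounded hLevi hB.neg)

end AMLevi

section Operators

variable {V W : Type*} [Lattice V] [AddCommGroup V]
  [CovariantClass V V (· + ·) (· ≤ ·)] [Module ℝ V]
  [TopologicalSpace V] [IsTopologicalAddGroup V] [ContinuousSMul ℝ V]
  [Lattice W] [AddCommGroup W]
  [CovariantClass W W (· + ·) (· ≤ ·)] [Module ℝ W]
  [TopologicalSpace W] [IsTopologicalAddGroup W] [ContinuousSMul ℝ W]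

theorem stmt6_general (hW : IsLocallySolid W)
    (hAM : HasAMProperty V) (hLevi : HasLeviProperty V)
    (T : V →ₗ[ℝ] W) (hT : OrderBoundedOp T) : BbBoundedOp T := by
  intro B hB
  obtain ⟨hlo, hhi⟩ := hT B (hAM.bddBelow_of_isVonNBounded hLevi hB)
    (hAM.bddAbove_of_isVonNBounded hLevi hB)
  exact hW.isVonNBounded_of_bddBelow_of_bddAbove hlo hhi

theorem stmt6 (hV : IsLocallySolid V) (hW : IsLocallySolid W)
    (hoc : OrderComplete V) (hAM : HasAMProperty V) (hLevi : HasLeviProperty V)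
    (T : V →ₗ[ℝ] W) (hT : OrderBoundedOp T) : BbBoundedOp T :=
  stmt6_general hW hAM hLevi T hT

end Operators
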